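/- For every complex number s with Re(s) ≥ 1, the partial sum ζ_3(s) = 1 + 2^{-s} + 3^{-s} is nonzero. -/

import Mathlib

/-! The terms `2^{-s}` and `3^{-s}` have absolute values at most `1/2` and `1/3` on `Re s ≥ 1`,
so they cannot cancel the leading term `1`, since `1/2 + 1/3 < 1`. -/

open Complex

theorem norm_natCast_cpow_neg_le_inv {n : ℕ} (hn : 0 < n) {s : ℂ} (hs : 1 ≤ s.re) :
    ‖(n : ℂ) ^ (-s)‖ ≤ (n : ℝ)⁻¹ := by
  rw [norm_natCast_cpow_of_pos hn, neg_re, ← Real.rpow_neg_one]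
  exact Real.rpow_le_rpow_of_exponent_le (Nat.one_le_cast.mpr hn) (by linarith)

theorem zeta3_ne_zero (s : ℂ) (hs : 1 ≤ s.re) :
    1 + (2 : ℂ) ^ (-s) + (3 : ℂ) ^ (-s) ≠ 0 := by
  have h2 := norm_natCast_cpow_neg_le_inv (n := 2) two_pos hs
  have h3 := norm_natCast_cpow_neg_le_inv (n := 3) three_pos hs
  push_cast at h2 h3
  intro h
  have hsum : -((2 : ℂ) ^ (-s) + (3 : ℂ) ^ (-s)) = 1 := by linear_combination -h
  have one_le_norms : (1 : ℝ) ≤ ‖(2 : ℂ) ^ (-s)‖ + ‖(3 : ℂ) ^ (-s)‖ := calc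
    (1 : ℝ) = ‖-((2 : ℂ) ^ (-s) + (3 : ℂ) ^ (-s))‖ := by rw [hsum, norm_one]
    _ ≤ _ := (norm_neg _).trans_le (norm_add_le _ _)
  linarith
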